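/- Suppose Φ is surjective. Then every β ∈ V* with β∘ρ_A = 0 can be written as β = −α + σ(b)∘c₀ for some (v,α) ∈ L and b ∈ B with c₀ v = ρ_B b. (Key surjectivity step on middle cohomology in the proof that the non-degeneracy conditions for 1-shifted coisotropic structures agree.) -/
import Mathlib


theorem factor_through_aux {K M N P' : Type*} [Field K] [AddCommGroup M] [Module K M]
    [AddCommGroup N] [Module K N] [AddCommGroup P'] [Module K P']
    (f : M →ₗ[K] N) (g : M →ₗ[K] P')
    (h : LinearMap.ker f ≤ LinearMap.ker g) : ∃ ξ : N →ₗ[K] P', ξ ∘ₗ f = g := by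
  obtain ⟨ξ, hξ⟩ := LinearMap.exists_extend
    (((LinearMap.ker f).liftQ g h) ∘ₗ
      (f.quotKerEquivRange.symm : ↥(LinearMap.range f) →ₗ[K] M ⧸ LinearMap.ker f))
  refine ⟨ξ, ?_⟩
  ext x
  have h1 := LinearMap.ext_iff.mp hξ ⟨f x, LinearMap.mem_range_self f x⟩
  simpa using h1


/-- A subspace `L ⊆ V × V*` is Lagrangian if it equals its orthogonal
complement with respect to the symmetric pairing
`⟨(v,α),(w,β)⟩ = α(w) + β(v)`. -/
def IsLagrangian {V : Type*} [AddCommGroup V] [Module ℝ V]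
    (L : Submodule ℝ (V × Module.Dual ℝ V)) : Prop :=
  ∀ x : V × Module.Dual ℝ V, x ∈ L ↔ ∀ y ∈ L, x.2 y.1 + y.2 x.1 = 0

set_option maxHeartbeats 1000000 in
/-- If `Φ : a ↦ ((ρ_A a, σ(c₁ a)∘c₀), c₁ a)` is surjective onto
`X = L ×_c B`, then every `β ∈ V*` with `β∘ρ_A = 0` can be written as
`β = −α + σ(b)∘c₀` for some `(v,α) ∈ L` and `b ∈ B` with `c₀ v = ρ_B b`. -/
theorem surjectivity_on_middle_cohomology
    {A B V W : Type*}
    [AddCommGroup A] [Module ℝ A] [FiniteDimensional ℝ A]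
    [AddCommGroup B] [Module ℝ B] [FiniteDimensional ℝ B]
    [AddCommGroup V] [Module ℝ V] [FiniteDimensional ℝ V]
    [AddCommGroup W] [Module ℝ W] [FiniteDimensional ℝ W]
    (ρA : A →ₗ[ℝ] V) (ρB : B →ₗ[ℝ] W) (σ : B →ₗ[ℝ] Module.Dual ℝ W)
    (c₀ : V →ₗ[ℝ] W) (c₁ : A →ₗ[ℝ] B)
    (hC : c₀ ∘ₗ ρA = ρB ∘ₗ c₁)
    (hH1 : ∀ b b' : B, σ b (ρB b') + σ b' (ρB b) = 0)
    (hH2 : ∀ b : B, ρB b = 0 → σ b = 0 → b = 0)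
    (hH3 : ∀ (w : W) (ξ : Module.Dual ℝ W), (∀ b : B, σ b w + ξ (ρB b) = 0) →
      ∃ b : B, ρB b = w ∧ σ b = ξ)
    (L : Submodule ℝ (V × Module.Dual ℝ V)) (hL : IsLagrangian L)
    (hM : ∀ (a : A) (v : V) (α : Module.Dual ℝ V), (v, α) ∈ L →
      α (ρA a) + σ (c₁ a) (c₀ v) = 0)
    (hPhiSurj : ∀ (v : V) (α : Module.Dual ℝ V) (b : B),
      (v, α) ∈ L → c₀ v = ρB b → α = σ b ∘ₗ c₀ →
      ∃ a : A, ρA a = v ∧ σ (c₁ a) ∘ₗ c₀ = α ∧ c₁ a = b) :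
    ∀ β : Module.Dual ℝ V, β ∘ₗ ρA = 0 →
      ∃ (v : V) (α : Module.Dual ℝ V) (b : B),
        (v, α) ∈ L ∧ c₀ v = ρB b ∧ β = -α + σ b ∘ₗ c₀ := by
  intro β hβ
  classical
  -- the linear map ((v,α),b) ↦ -α + σ b ∘ c₀
  set T : ((V × Module.Dual ℝ V) × B) →ₗ[ℝ] Module.Dual ℝ V :=
    (c₀.dualMap ∘ₗ σ ∘ₗ LinearMap.snd ℝ (V × Module.Dual ℝ V) B)
      - (LinearMap.snd ℝ V (Module.Dual ℝ V) ∘ₗ LinearMap.fst ℝ (V × Module.Dual ℝ V) B)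
    with hT
  have hTapp : ∀ (v : V) (α : Module.Dual ℝ V) (b : B),
      T ((v, α), b) = -α + σ b ∘ₗ c₀ := by
    intro v α b
    ext w
    simp [hT]
    ring
  set Y : Submodule ℝ ((V × Module.Dual ℝ V) × B) :=
    L.comap (LinearMap.fst ℝ (V × Module.Dual ℝ V) B) ⊓
    LinearMap.ker ((c₀ ∘ₗ LinearMap.fst ℝ V (Module.Dual ℝ V)
        ∘ₗ LinearMap.fst ℝ (V × Module.Dual ℝ V) B)
      - (ρB ∘ₗ LinearMap.snd ℝ (V × Module.Dual ℝ V) B)) with hY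
  have hYmem : ∀ (v : V) (α : Module.Dual ℝ V) (b : B),
      ((v, α), b) ∈ Y ↔ ((v, α) ∈ L ∧ c₀ v = ρB b) := by
    intro v α b
    simp [hY, Submodule.mem_inf, LinearMap.mem_ker, sub_eq_zero]
  set D : Submodule ℝ (Module.Dual ℝ V) := Y.map T with hD
  -- membership in D
  have hDmem : ∀ (v : V) (α : Module.Dual ℝ V) (b : B), (v, α) ∈ L → c₀ v = ρB b →
      (-α + σ b ∘ₗ c₀) ∈ D := by
    intro v α b h1 h2
    exact ⟨((v, α), b), (hYmem v α b).2 ⟨h1, h2⟩, hTapp v α b⟩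
  -- key: the coannihilator of D is contained in the range of ρA
  have hkey : D.dualCoannihilator ≤ LinearMap.range ρA := by
    intro u hu
    rw [Submodule.mem_dualCoannihilator] at hu
    have hstar : ∀ (v : V) (α : Module.Dual ℝ V) (b : B), (v, α) ∈ L → c₀ v = ρB b →
        α u = σ b (c₀ u) := by
      intro v α b h1 h2
      have := hu _ (hDmem v α b h1 h2)
      simp at this
      linarith
    -- the auxiliary maps on ↥L × B
    set P : (↥L × B) →ₗ[ℝ] W :=
      (c₀ ∘ₗ LinearMap.fst ℝ V (Module.Dual ℝ V) ∘ₗ L.subtype ∘ₗ LinearMap.fst ℝ ↥L B)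
        + (ρB ∘ₗ LinearMap.snd ℝ ↥L B) with hP
    set φ : (↥L × B) →ₗ[ℝ] ℝ :=
      -((LinearMap.applyₗ u) ∘ₗ LinearMap.snd ℝ V (Module.Dual ℝ V) ∘ₗ L.subtype
          ∘ₗ LinearMap.fst ℝ ↥L B)
        - ((LinearMap.applyₗ (c₀ u)) ∘ₗ σ ∘ₗ LinearMap.snd ℝ ↥L B) with hφ
    have hPapp : ∀ (x : ↥L × B), P x = c₀ (x.1 : V × Module.Dual ℝ V).1 + ρB x.2 := by
      intro x; simp [hP]
    have hφapp : ∀ (x : ↥L × B),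
        φ x = -((x.1 : V × Module.Dual ℝ V).2 u) - σ x.2 (c₀ u) := by
      intro x; simp [hφ]
    have hker : LinearMap.ker P ≤ LinearMap.ker φ := by
      intro x hx
      rw [LinearMap.mem_ker] at hx ⊢
      rw [hPapp] at hx
      rw [hφapp]
      have h2 : c₀ (x.1 : V × Module.Dual ℝ V).1 = ρB (-x.2) := by
        rw [map_neg]; exact eq_neg_of_add_eq_zero_left hx
      have h3 := hstar (x.1 : V × Module.Dual ℝ V).1 (x.1 : V × Module.Dual ℝ V).2 (-x.2)
        (by simpa using x.1.2) h2
      rw [map_neg] at h3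
      simp at h3
      linarith
    obtain ⟨ξ, hξ⟩ := factor_through_aux (K := ℝ) (M := ↥L × B) (N := W) (P' := ℝ) P φ hker
    have hξapp : ∀ (x : ↥L × B), ξ (P x) = φ x := fun x => LinearMap.ext_iff.mp hξ x
    -- ξ satisfies the hypothesis of hH3 at c₀ u
    have hH3hyp : ∀ b : B, σ b (c₀ u) + ξ (ρB b) = 0 := by
      intro b
      have := hξapp (0, b)
      rw [hPapp, hφapp] at this
      simp at this
      linarith
    obtain ⟨bu, hbu1, hbu2⟩ := hH3 (c₀ u) ξ hH3hyp
    -- (u, ξ ∘ c₀) ∈ L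
    have hmem : (u, ξ ∘ₗ c₀) ∈ L := by
      rw [hL]
      rintro ⟨v, α⟩ hy
      have := hξapp (⟨(v, α), hy⟩, 0)
      rw [hPapp, hφapp] at this
      simp at this ⊢
      linarith
    obtain ⟨a, ha, -, -⟩ := hPhiSurj u (ξ ∘ₗ c₀) bu hmem hbu1.symm (by rw [hbu2])
    exact ⟨a, ha⟩
  -- conclude by duality
  have hDeq : D.dualCoannihilator.dualAnnihilator = D :=
    Subspace.dualCoannihilator_dualAnnihilator_eq
  have hβD : β ∈ D := by
    rw [← hDeq]
    apply Submodule.dualAnnihilator_anti hkey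
    rw [Submodule.mem_dualAnnihilator]
    rintro v ⟨a, rfl⟩
    exact LinearMap.ext_iff.mp hβ a
  obtain ⟨⟨⟨v, α⟩, b⟩, hmem, hTx⟩ := hβD
  obtain ⟨h1, h2⟩ := (hYmem v α b).1 hmem
  exact ⟨v, α, b, h1, h2, by rw [← hTx, hTapp]⟩
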